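/- Let φ ∈ L¹(ℝ) be a low-pass filter with ∫|t||φ(t)| dt < ∞ and let φ_J(t) = 2^{−J} φ(2^{−J} t). Then for any x ∈ L²(ℝ) and c ∈ ℝ, ‖x ⋆ φ_J − (T_c x) ⋆ φ_J‖₂ ≤ |c| · 2^{−J} · ‖φ'‖₁ · ‖x‖₂, provided φ is differentiable with φ' ∈ L¹(ℝ). In particular the averaged coefficients become translation invariant as J → ∞. -/

import Mathlib

/-! Translation commutes with convolution, so the difference of the two averages is the convolution
of `x` with `φ_J - T_c φ_J`. Young's inequality `‖k ⋆ x‖₂ ≤ ‖k‖₁ ‖x‖₂` (Cauchy–Schwarz against the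
weight `|k(t - ·)|`, then Tonelli) reduces the claim to `‖φ_J - T_c φ_J‖₁ ≤ |c| ‖φ_J'‖₁`. Writing
`φ_J(u) - φ_J(u - c)` as the integral of `φ_J'(u - r)` over `r` between `0` and `c` and applying
Tonelli gives this bound, and rescaling gives `‖φ_J'‖₁ = 2^{-J} ‖φ'‖₁`. -/

open MeasureTheory Set
open scoped ENNReal

theorem sq_lintegral_mul_le {α : Type*} [MeasurableSpace α] {μ : Measure α} {w f : α → ℝ≥0∞}
    (hw : AEMeasurable w μ) (hf : AEMeasurable f μ) :
    (∫⁻ a, w a * f a ∂μ) ^ 2 ≤ (∫⁻ a, w a ∂μ) * ∫⁻ a, w a * f a ^ 2 ∂μ := by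
  have hsplit : ∀ a, w a * f a = w a ^ (2⁻¹ : ℝ) * (w a * f a ^ 2) ^ (2⁻¹ : ℝ) := fun a => by
    rw [ENNReal.mul_rpow_of_nonneg _ _ (by norm_num), ← mul_assoc,
      ← ENNReal.rpow_add_of_nonneg _ _ (by norm_num) (by norm_num), ← ENNReal.rpow_natCast,
      ← ENNReal.rpow_mul]
    norm_num
  have hsq : ∀ y : ℝ≥0∞, (y ^ (2⁻¹ : ℝ)) ^ 2 = y := fun y => by
    rw [← ENNReal.rpow_natCast, ← ENNReal.rpow_mul]; norm_num
  calc (∫⁻ a, w a * f a ∂μ) ^ 2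
      ≤ ((∫⁻ a, w a ∂μ) ^ (2⁻¹ : ℝ) * (∫⁻ a, w a * f a ^ 2 ∂μ) ^ (2⁻¹ : ℝ)) ^ 2 := by
        simp_rw [hsplit]
        gcongr
        exact ENNReal.lintegral_mul_norm_pow_le hw (hw.mul (hf.pow_const 2)) (by norm_num)
          (by norm_num) (by norm_num)
    _ = (∫⁻ a, w a ∂μ) * ∫⁻ a, w a * f a ^ 2 ∂μ := by rw [mul_pow, hsq, hsq]

section Convolution

variable {G : Type*} [MeasurableSpace G] [AddCommGroup G] [MeasurableAdd₂ G] [MeasurableNeg G]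
  {μ : Measure G} [SFinite μ] [μ.IsAddLeftInvariant] [μ.IsNegInvariant]

theorem lintegral_sq_lintegral_sub_mul_le {g x : G → ℝ≥0∞} (hg : AEMeasurable g μ)
    (hx : AEMeasurable x μ) :
    ∫⁻ t, (∫⁻ s, g (t - s) * x s ∂μ) ^ 2 ∂μ ≤ (∫⁻ u, g u ∂μ) ^ 2 * ∫⁻ s, x s ^ 2 ∂μ := by
  have hprod : AEMeasurable (fun p : G × G => g (p.1 - p.2) * x p.2 ^ 2) (μ.prod μ) :=
    (hg.comp_quasiMeasurePreserving (quasiMeasurePreserving_sub μ μ)).mul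
      (hx.comp_snd.pow_const 2)
  have hleft (t : G) : AEMeasurable (fun s => g (t - s)) μ :=
    hg.comp_quasiMeasurePreserving (quasiMeasurePreserving_sub_left μ t)
  have hright (s : G) : AEMeasurable (fun t => g (t - s)) μ :=
    hg.comp_quasiMeasurePreserving (measurePreserving_sub_right μ s).quasiMeasurePreserving
  calc ∫⁻ t, (∫⁻ s, g (t - s) * x s ∂μ) ^ 2 ∂μ
      ≤ ∫⁻ t, (∫⁻ u, g u ∂μ) * ∫⁻ s, g (t - s) * x s ^ 2 ∂μ ∂μ := lintegral_mono fun t => by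
        simpa only [lintegral_sub_left_eq_self g t] using sq_lintegral_mul_le (hleft t) hx
    _ = (∫⁻ u, g u ∂μ) * ∫⁻ s, ∫⁻ t, g (t - s) * x s ^ 2 ∂μ ∂μ := by
        rw [lintegral_const_mul'' _ hprod.lintegral_prod_right', lintegral_lintegral_swap hprod]
    _ = (∫⁻ u, g u ∂μ) * ∫⁻ s, (∫⁻ u, g u ∂μ) * x s ^ 2 ∂μ := by
        congr 1
        refine lintegral_congr fun s => ?_
        rw [lintegral_mul_const'' _ (hright s), lintegral_sub_right_eq_self g s]
    _ = (∫⁻ u, g u ∂μ) ^ 2 * ∫⁻ s, x s ^ 2 ∂μ := by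
        rw [lintegral_const_mul'' _ (hx.pow_const 2), ← mul_assoc, sq]

variable {E : Type*} [NormedAddCommGroup E] [NormedSpace ℝ E]

theorem eLpNorm_two_integral_sub_smul_le {g : G → ℝ} {x : G → E}
    (hg : AEStronglyMeasurable g μ) (hx : AEStronglyMeasurable x μ) :
    eLpNorm (fun t => ∫ s, g (t - s) • x s ∂μ) 2 μ ≤ (∫⁻ u, ‖g u‖ₑ ∂μ) * eLpNorm x 2 μ := by
  have hpt (t : G) : ‖∫ s, g (t - s) • x s ∂μ‖ₑ ≤ ∫⁻ s, ‖g (t - s)‖ₑ * ‖x s‖ₑ ∂μ := by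
    simpa only [enorm_smul] using
      enorm_integral_le_lintegral_enorm (fun s => g (t - s) • x s) (μ := μ)
  simp only [eLpNorm_eq_lintegral_rpow_enorm_toReal two_ne_zero ENNReal.ofNat_ne_top,
    ENNReal.toReal_ofNat, ENNReal.rpow_two]
  calc (∫⁻ t, ‖∫ s, g (t - s) • x s ∂μ‖ₑ ^ 2 ∂μ) ^ (1 / 2 : ℝ)
      ≤ (∫⁻ t, (∫⁻ s, ‖g (t - s)‖ₑ * ‖x s‖ₑ ∂μ) ^ 2 ∂μ) ^ (1 / 2 : ℝ) := by
        gcongr with t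
        exact hpt t
    _ ≤ ((∫⁻ u, ‖g u‖ₑ ∂μ) ^ 2 * ∫⁻ s, ‖x s‖ₑ ^ 2 ∂μ) ^ (1 / 2 : ℝ) := by
        gcongr
        exact lintegral_sq_lintegral_sub_mul_le hg.enorm hx.enorm
    _ = (∫⁻ u, ‖g u‖ₑ ∂μ) * (∫⁻ s, ‖x s‖ₑ ^ 2 ∂μ) ^ (1 / 2 : ℝ) := by
        rw [ENNReal.mul_rpow_of_nonneg _ _ (by norm_num), ← ENNReal.rpow_natCast,
          ← ENNReal.rpow_mul]
        norm_num

theorem ae_integrable_sub_smul {g : G → ℝ} {x : G → E} (hg : Integrable g μ)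
    (hx : MemLp x 2 μ) :
    ∀ᵐ t ∂μ, Integrable (fun s => g (t - s) • x s) μ := by
  have hx2 : ∫⁻ s, ‖x s‖ₑ ^ 2 ∂μ < ∞ := by
    simpa only [ENNReal.toReal_ofNat, ENNReal.rpow_two] using
      (eLpNorm_lt_top_iff_lintegral_rpow_enorm_lt_top two_ne_zero ENNReal.ofNat_ne_top).1
        hx.eLpNorm_lt_top
  have hfin : ∫⁻ t, (∫⁻ s, ‖g (t - s)‖ₑ * ‖x s‖ₑ ∂μ) ^ 2 ∂μ ≠ ∞ :=
    ((lintegral_sq_lintegral_sub_mul_le hg.1.enorm hx.1.enorm).trans_lt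
      (ENNReal.mul_lt_top (ENNReal.pow_lt_top hg.2) hx2)).ne
  have hmeas : AEMeasurable (fun t => (∫⁻ s, ‖g (t - s)‖ₑ * ‖x s‖ₑ ∂μ) ^ 2) μ :=
    (((hg.1.enorm.comp_quasiMeasurePreserving (quasiMeasurePreserving_sub μ μ)).mul
      hx.1.enorm.comp_snd).lintegral_prod_right').pow_const 2
  filter_upwards [ae_lt_top' hmeas hfin] with t ht
  refine ⟨(hg.1.comp_quasiMeasurePreserving (quasiMeasurePreserving_sub_left μ t)).smul hx.1, ?_⟩
  simpa only [HasFiniteIntegral, enorm_smul, ENNReal.pow_lt_top_iff, two_ne_zero, or_false]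
    using ht

theorem integral_sub_smul_sub_integral_sub_smul_translate_ae_eq {g : G → ℝ} {x : G → E}
    (hg : Integrable g μ) (hx : MemLp x 2 μ) (c : G) :
    (fun t => (∫ s, g (t - s) • x s ∂μ) - ∫ s, g (t - s) • x (s - c) ∂μ)
      =ᵐ[μ] fun t => ∫ s, (g (t - s) - g (t - s - c)) • x s ∂μ := by
  -- both integrals must be genuine, not the junk value `0`, before they can be merged
  have hint := ae_integrable_sub_smul hg hx
  filter_upwards [hint, (measurePreserving_sub_right μ c).quasiMeasurePreserving.ae hint]
    with t h h_c
  have hshift : ∫ s, g (t - s) • x (s - c) ∂μ = ∫ s, g (t - s - c) • x s ∂μ := by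
    rw [← integral_sub_right_eq_self (fun s => g (t - s - c) • x s) c]
    simp only [sub_sub, sub_add_cancel]
  simp only [sub_right_comm t c] at h_c
  rw [hshift, ← integral_sub h h_c]
  simp_rw [sub_smul]

end Convolution

theorem lintegral_enorm_sub_comp_sub_le {E : Type*} [NormedAddCommGroup E] [NormedSpace ℝ E]
    [CompleteSpace E] {f : ℝ → E} (hf : Differentiable ℝ f) (hf' : Integrable (deriv f))
    (c : ℝ) :
    ∫⁻ u, ‖f u - f (u - c)‖ₑ ≤ ENNReal.ofReal |c| * ∫⁻ u, ‖deriv f u‖ₑ := by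
  have hmeas : Measurable fun p : ℝ × ℝ => ‖deriv f (p.1 - p.2)‖ₑ :=
    (stronglyMeasurable_deriv f).enorm.comp (measurable_fst.sub measurable_snd)
  have hpt (u : ℝ) : ‖f u - f (u - c)‖ₑ ≤ ∫⁻ r in uIoc 0 c, ‖deriv f (u - r)‖ₑ := by
    have hftc : ∫ r in 0..c, deriv f (u - r) = f u - f (u - c) := by
      rw [intervalIntegral.integral_comp_sub_left (deriv f) u, sub_zero,
        intervalIntegral.integral_eq_sub_of_hasDerivAt (fun r _ => (hf r).hasDerivAt)
          hf'.intervalIntegrable]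
    have hnorm := intervalIntegral.norm_integral_eq_norm_integral_uIoc
      (fun r => deriv f (u - r)) (a := 0) (b := c) (μ := volume)
    rw [hftc] at hnorm
    rw [← ofReal_norm, hnorm, ofReal_norm]
    exact enorm_integral_le_lintegral_enorm _
  calc ∫⁻ u, ‖f u - f (u - c)‖ₑ
      ≤ ∫⁻ u, ∫⁻ r in uIoc 0 c, ‖deriv f (u - r)‖ₑ := lintegral_mono hpt
    _ = ∫⁻ r in uIoc 0 c, ∫⁻ u, ‖deriv f (u - r)‖ₑ :=
        lintegral_lintegral_swap hmeas.aemeasurable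
    _ = ∫⁻ r in uIoc 0 c, ∫⁻ u, ‖deriv f u‖ₑ := by
        simp only [lintegral_sub_right_eq_self (fun u => ‖deriv f u‖ₑ)]
    _ = ENNReal.ofReal |c| * ∫⁻ u, ‖deriv f u‖ₑ := by
        rw [setLIntegral_const, Real.volume_uIoc, sub_zero, mul_comm]

/-- `dilate (2 ^ (-J)) φ` is the paper's `φ_J`. -/
def dilate (a : ℝ) (φ : ℝ → ℝ) (u : ℝ) : ℝ := a * φ (a * u)

theorem MeasureTheory.Integrable.dilate {φ : ℝ → ℝ} (hφ : Integrable φ) {a : ℝ} (ha : a ≠ 0) :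
    Integrable (dilate a φ) :=
  (hφ.comp_mul_left' ha).const_mul a

theorem Differentiable.dilate {φ : ℝ → ℝ} (hφ : Differentiable ℝ φ) (a : ℝ) :
    Differentiable ℝ (dilate a φ) :=
  (hφ.comp (differentiable_id.const_mul a)).const_mul a

theorem deriv_dilate (a : ℝ) (φ : ℝ → ℝ) : deriv (dilate a φ) = a • dilate a (deriv φ) := by
  ext u
  change deriv (fun u => a * φ (a * u)) u = a * (a * deriv φ (a * u))
  rw [deriv_const_mul_field, deriv_comp_mul_left (f := φ), smul_eq_mul]

theorem integral_norm_dilate {a : ℝ} (ha : 0 < a) (φ : ℝ → ℝ) :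
    ∫ u, ‖dilate a φ u‖ = ∫ u, ‖φ u‖ := by
  simp only [dilate, norm_mul, Real.norm_of_nonneg ha.le, integral_const_mul,
    Measure.integral_comp_mul_left (fun u => ‖φ u‖) a, abs_inv, abs_of_pos ha, smul_eq_mul]
  field_simp

theorem integral_norm_deriv_dilate {a : ℝ} (ha : 0 < a) (φ : ℝ → ℝ) :
    ∫ u, ‖deriv (dilate a φ) u‖ = a * ∫ u, ‖deriv φ u‖ := by
  simp only [deriv_dilate, Pi.smul_apply, norm_smul, Real.norm_of_nonneg ha.le,
    integral_const_mul, integral_norm_dilate ha]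

theorem lowpass_translation_invariance_general
    (φ : ℝ → ℝ) (hφ : Integrable φ (volume : Measure ℝ))
    (hφdiff : Differentiable ℝ φ)
    (hφ' : Integrable (deriv φ) (volume : Measure ℝ))
    (J : ℕ) (x : ℝ → ℂ) (hx : MemLp x 2 (volume : Measure ℝ)) (c : ℝ) :
    eLpNorm
      (fun t => (∫ s, ((2:ℝ)^(-(J:ℝ)) * φ ((2:ℝ)^(-(J:ℝ)) * (t - s))) • x s)
        - ∫ s, ((2:ℝ)^(-(J:ℝ)) * φ ((2:ℝ)^(-(J:ℝ)) * (t - s))) • x (s - c))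
      2 (volume : Measure ℝ)
    ≤ ENNReal.ofReal (|c| * (2:ℝ)^(-(J:ℝ)) * ∫ t, |deriv φ t|)
        * eLpNorm x 2 (volume : Measure ℝ) := by
  set a : ℝ := (2:ℝ)^(-(J:ℝ))
  have ha : 0 < a := by positivity
  set ψ := dilate a φ
  have hψc : Continuous ψ := (hφdiff.dilate a).continuous
  have hψ' : Integrable (deriv ψ) := by
    rw [deriv_dilate]
    exact (hφ'.dilate ha.ne').smul a
  have hψ'_norm : ∫⁻ u, ‖deriv ψ u‖ₑ = ENNReal.ofReal (a * ∫ t, |deriv φ t|) := by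
    rw [← ofReal_integral_norm_eq_lintegral_enorm hψ', integral_norm_deriv_dilate ha]
    simp only [Real.norm_eq_abs]
  calc eLpNorm (fun t => (∫ s, ψ (t - s) • x s) - ∫ s, ψ (t - s) • x (s - c)) 2 volume
      = eLpNorm (fun t => ∫ s, (ψ (t - s) - ψ (t - s - c)) • x s) 2 volume :=
        eLpNorm_congr_ae (integral_sub_smul_sub_integral_sub_smul_translate_ae_eq
          (hφ.dilate ha.ne') hx c)
    _ ≤ (∫⁻ u, ‖ψ u - ψ (u - c)‖ₑ) * eLpNorm x 2 volume :=
        eLpNorm_two_integral_sub_smul_le (g := fun u => ψ u - ψ (u - c))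
          (by fun_prop : Continuous fun u => ψ u - ψ (u - c)).aestronglyMeasurable hx.1
    _ ≤ ENNReal.ofReal |c| * ENNReal.ofReal (a * ∫ t, |deriv φ t|) * eLpNorm x 2 volume := by
        rw [← hψ'_norm]
        gcongr
        exact lintegral_enorm_sub_comp_sub_le (hφdiff.dilate a) hψ' c
    _ = ENNReal.ofReal (|c| * a * ∫ t, |deriv φ t|) * eLpNorm x 2 volume := by
        rw [← ENNReal.ofReal_mul (abs_nonneg c), mul_assoc]

/-- Translation-invariance rate of the averaged (low-pass) coefficients:
`‖x ⋆ φ_J − (T_c x) ⋆ φ_J‖₂ ≤ |c| · 2^{−J} · ‖φ'‖₁ · ‖x‖₂`. -/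
theorem lowpass_translation_invariance
    (φ : ℝ → ℝ) (hφ : Integrable φ (volume : Measure ℝ))
    (hφmom : Integrable (fun t => |t| * |φ t|) (volume : Measure ℝ))
    (hφdiff : Differentiable ℝ φ)
    (hφ' : Integrable (deriv φ) (volume : Measure ℝ))
    (J : ℕ) (x : ℝ → ℂ) (hx : MemLp x 2 (volume : Measure ℝ)) (c : ℝ) :
    eLpNorm
      (fun t => (∫ s, ((2:ℝ)^(-(J:ℝ)) * φ ((2:ℝ)^(-(J:ℝ)) * (t - s))) • x s)
        - ∫ s, ((2:ℝ)^(-(J:ℝ)) * φ ((2:ℝ)^(-(J:ℝ)) * (t - s))) • x (s - c))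
      2 (volume : Measure ℝ)
    ≤ ENNReal.ofReal (|c| * (2:ℝ)^(-(J:ℝ)) * ∫ t, |deriv φ t|)
        * eLpNorm x 2 (volume : Measure ℝ) :=
  lowpass_translation_invariance_general φ hφ hφdiff hφ' J x hx c
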